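/- For every k ≥ 1 there is a constant C = C(k) > 0 with the following property (Euclidean case of the Velázquez-type weighted smoothing inequality). For every τ > 0, all radii r ≥ 0 and r̃ ≥ 0, and every nonnegative measurable ψ : ℝ^k → ℝ with N_{r̃}(ψ) < ∞, the function (S(τ)ψ)(y) = ∫_{ℝ^k} K_τ(y,z)·ψ(z) dz is finite for all y, and N_r(S(τ)ψ) ≤ C · e^τ · (4π(1 − e^{−τ}))^{−k/2} · exp( e^{−τ}·((r − r̃·e^{τ/2})₊)² / (4(1 − e^{−τ})) ) · N_{r̃}(ψ), where (a)₊ = max(a, 0). -/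

import Mathlib

open Real MeasureTheory ENNReal

/-- The Mehler-type kernel on `ℝ^k`:
`K_τ(y,z) = e^τ (4π(1 − e^{−τ}))^{−k/2} exp(−|y e^{−τ/2} − z|²/(4(1 − e^{−τ})))`. -/
noncomputable def mehlerK (k : ℕ) (τ : ℝ) (y z : EuclideanSpace ℝ (Fin k)) : ℝ :=
  Real.exp τ * (4 * π * (1 - Real.exp (-τ))) ^ (-(k : ℝ) / 2) *
    Real.exp (-‖Real.exp (-τ / 2) • y - z‖ ^ 2 / (4 * (1 - Real.exp (-τ))))

/-- The local Gaussian norm `N_r(ψ) = sup_{|ξ| ≤ r} (∫ ψ(y)² e^{−|y−ξ|²/4} dy)^{1/2}`,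
valued in `ℝ≥0∞`. -/
noncomputable def gaussN (k : ℕ) (r : ℝ) (ψ : EuclideanSpace ℝ (Fin k) → ℝ) : ℝ≥0∞ :=
  ⨆ ξ ∈ {ξ : EuclideanSpace ℝ (Fin k) | ‖ξ‖ ≤ r},
    (∫⁻ y, ENNReal.ofReal ((ψ y) ^ 2 * Real.exp (-‖y - ξ‖ ^ 2 / 4))) ^ (1 / 2 : ℝ)

/-!
The Mehler kernel is a Gaussian of variance `2(1 - e^{-τ})` centred at `e^{-τ/2} y`. Splitting
`ψ(z) = ψ(z) e^{-|z-ξ'|²/8} · e^{|z-ξ'|²/8}` and applying Cauchy–Schwarz bounds `S(τ)ψ(y)`, for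
every `|ξ'| ≤ r'`, by `N_{r'}(ψ)` times the growing Gaussian
`exp(e^{-τ}|y - e^{τ/2}ξ'|² / (4(1 + e^{-τ})))`. Its growth rate stays below `1/8`, so squaring and
integrating against `e^{-|y-ξ|²/4}` is again an explicit Gaussian integral; it produces the factor
`exp(e^{-τ}|ξ - e^{τ/2}ξ'|² / (4(1 - e^{-τ})))`, and the normalisations of the two Gaussian
integrals multiply to `C = (4π)^{k/2}`. Finally `ξ'` is taken to be the point of the `r'`-ball
nearest to `e^{-τ/2}ξ`, for which `|ξ - e^{τ/2}ξ'| ≤ (r - r' e^{τ/2})₊`.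
-/

section Gaussian

variable {V : Type*} [NormedAddCommGroup V] [InnerProductSpace ℝ V]

theorem neg_mul_norm_sub_sq_add_mul_norm_sub_sq {α β : ℝ} (hαβ : α ≠ β) (w v z : V) :
    -α * ‖z - w‖ ^ 2 + β * ‖z - v‖ ^ 2 =
      -(α - β) * ‖z - ((α / (α - β)) • w - (β / (α - β)) • v)‖ ^ 2
        + α * β / (α - β) * ‖w - v‖ ^ 2 := by
  have : α - β ≠ 0 := sub_ne_zero.mpr hαβ
  simp only [norm_sub_sq_real, inner_sub_right, real_inner_smul_left,
    real_inner_smul_right, norm_smul, Real.norm_eq_abs, mul_pow, sq_abs]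
  field_simp
  ring

variable [FiniteDimensional ℝ V] [MeasurableSpace V] [BorelSpace V]

theorem lintegral_ofReal_exp_neg_mul_norm_sub_sq {b : ℝ} (hb : 0 < b) (c : V) :
    ∫⁻ z, ENNReal.ofReal (rexp (-b * ‖z - c‖ ^ 2)) =
      ENNReal.ofReal ((π / b) ^ (Module.finrank ℝ V / 2 : ℝ)) := by
  have hint := GaussianFourier.integral_rexp_neg_mul_sq_norm (V := V) hb
  rw [lintegral_sub_right_eq_self (fun z => ENNReal.ofReal (rexp (-b * ‖z‖ ^ 2))) c,
    ← ofReal_integral_eq_lintegral_ofReal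
      (.of_integral_ne_zero (by rw [hint]; positivity))
      (Filter.Eventually.of_forall fun _ => (exp_pos _).le), hint]

theorem lintegral_ofReal_exp_neg_mul_norm_sub_sq_add {α β : ℝ} (hβα : β < α) (w v : V) :
    ∫⁻ z, ENNReal.ofReal (rexp (-α * ‖z - w‖ ^ 2 + β * ‖z - v‖ ^ 2)) =
      ENNReal.ofReal ((π / (α - β)) ^ (Module.finrank ℝ V / 2 : ℝ) *
        rexp (α * β / (α - β) * ‖w - v‖ ^ 2)) := by
  simp_rw [neg_mul_norm_sub_sq_add_mul_norm_sub_sq hβα.ne' w v, Real.exp_add,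
    ENNReal.ofReal_mul (exp_pos _).le]
  rw [lintegral_mul_const' _ _ ENNReal.ofReal_ne_top,
    lintegral_ofReal_exp_neg_mul_norm_sub_sq (sub_pos.mpr hβα),
    ← ENNReal.ofReal_mul (by positivity)]

theorem lintegral_ofReal_exp_neg_mul_norm_sub_sq_mul_le {b : ℝ} (hb : 1 / 8 < b) {ψ : V → ℝ}
    (hψ : AEMeasurable ψ) (w ξ : V) :
    ∫⁻ z, ENNReal.ofReal (rexp (-b * ‖z - w‖ ^ 2) * ψ z) ≤
      ENNReal.ofReal ((π / (2 * b - 1 / 4)) ^ (Module.finrank ℝ V / 4 : ℝ) *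
          rexp (b / (8 * b - 1) * ‖w - ξ‖ ^ 2)) *
        (∫⁻ z, ENNReal.ofReal (ψ z ^ 2 * rexp (-‖z - ξ‖ ^ 2 / 4))) ^ (1 / 2 : ℝ) := by
  set F : V → ℝ≥0∞ := fun z => ENNReal.ofReal (rexp (-b * ‖z - w‖ ^ 2 + ‖z - ξ‖ ^ 2 / 8))
  set G : V → ℝ≥0∞ := fun z => ENNReal.ofReal (|ψ z| * rexp (-‖z - ξ‖ ^ 2 / 8))
  have hFG : ∀ z, ENNReal.ofReal (rexp (-b * ‖z - w‖ ^ 2) * ψ z) ≤ F z * G z := fun z => by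
    have hexp : rexp (-b * ‖z - w‖ ^ 2 + ‖z - ξ‖ ^ 2 / 8) * rexp (-‖z - ξ‖ ^ 2 / 8) =
        rexp (-b * ‖z - w‖ ^ 2) := by
      rw [← Real.exp_add]
      ring_nf
    rw [← ENNReal.ofReal_mul (exp_pos _).le, mul_comm |ψ z|, ← mul_assoc, hexp]
    gcongr
    exact le_abs_self _
  have hF : ∫⁻ z, F z ^ (2 : ℝ) = ENNReal.ofReal ((π / (2 * b - 1 / 4)) ^
      (Module.finrank ℝ V / 2 : ℝ) * rexp (2 * b * (1 / 4) / (2 * b - 1 / 4) * ‖w - ξ‖ ^ 2)) := by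
    rw [← lintegral_ofReal_exp_neg_mul_norm_sub_sq_add (by linarith) w ξ]
    congr 1 with z
    rw [ENNReal.rpow_two, ← ENNReal.ofReal_pow (exp_pos _).le, ← Real.exp_nat_mul]
    ring_nf
  have hG : ∫⁻ z, G z ^ (2 : ℝ) = ∫⁻ z, ENNReal.ofReal (ψ z ^ 2 * rexp (-‖z - ξ‖ ^ 2 / 4)) := by
    congr 1 with z
    rw [ENNReal.rpow_two, ← ENNReal.ofReal_pow (by positivity), mul_pow, sq_abs,
      ← Real.exp_nat_mul]
    ring_nf
  have hsqrt : ENNReal.ofReal ((π / (2 * b - 1 / 4)) ^ (Module.finrank ℝ V / 2 : ℝ) *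
      rexp (2 * b * (1 / 4) / (2 * b - 1 / 4) * ‖w - ξ‖ ^ 2)) ^ (1 / 2 : ℝ) =
      ENNReal.ofReal ((π / (2 * b - 1 / 4)) ^ (Module.finrank ℝ V / 4 : ℝ) *
        rexp (b / (8 * b - 1) * ‖w - ξ‖ ^ 2)) := by
    have h2b : 0 < 2 * b - 1 / 4 := by linarith
    have h8b : 8 * b - 1 ≠ 0 := by linarith
    rw [ENNReal.ofReal_rpow_of_nonneg (by positivity) (by norm_num),
      Real.mul_rpow (by positivity) (by positivity), ← Real.rpow_mul (by positivity),
      ← Real.exp_mul]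
    congr 2
    · congr 1
      ring
    · congr 1
      field_simp
      ring
  calc ∫⁻ z, ENNReal.ofReal (rexp (-b * ‖z - w‖ ^ 2) * ψ z)
      ≤ ∫⁻ z, F z * G z := lintegral_mono hFG
    _ ≤ (∫⁻ z, F z ^ (2 : ℝ)) ^ (1 / 2 : ℝ) * (∫⁻ z, G z ^ (2 : ℝ)) ^ (1 / 2 : ℝ) :=
      ENNReal.lintegral_mul_le_Lp_mul_Lq volume ⟨by norm_num, by norm_num, by norm_num⟩
        (by fun_prop) ((hψ.abs.mul (by fun_prop)).ennreal_ofReal)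
    _ = _ := by rw [hF, hG, hsqrt]

theorem rpow_lintegral_sq_mul_exp_le {a M : ℝ} (ha : a < 1 / 8) {f : V → ℝ} (v ξ : V)
    (hf : ∀ y, |f y| ≤ M * rexp (a * ‖y - v‖ ^ 2)) :
    (∫⁻ y, ENNReal.ofReal (f y ^ 2 * rexp (-‖y - ξ‖ ^ 2 / 4))) ^ (1 / 2 : ℝ) ≤
      ENNReal.ofReal (M * (4 * π / (1 - 8 * a)) ^ (Module.finrank ℝ V / 4 : ℝ) *
        rexp (a / (1 - 8 * a) * ‖ξ - v‖ ^ 2)) := by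
  have hM : 0 ≤ M := by simpa using (abs_nonneg _).trans (hf v)
  have h8a : 0 < 1 - 8 * a := by linarith
  have h2a : 0 < 1 / 4 - 2 * a := by linarith
  have hpt : ∀ y, ENNReal.ofReal (f y ^ 2 * rexp (-‖y - ξ‖ ^ 2 / 4)) ≤
      ENNReal.ofReal (M ^ 2) *
        ENNReal.ofReal (rexp (-(1 / 4) * ‖y - ξ‖ ^ 2 + 2 * a * ‖y - v‖ ^ 2)) := fun y => by
    have hsq : f y ^ 2 ≤ M ^ 2 * rexp (2 * a * ‖y - v‖ ^ 2) := by
      calc f y ^ 2 = |f y| ^ 2 := (sq_abs _).symm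
        _ ≤ (M * rexp (a * ‖y - v‖ ^ 2)) ^ 2 := pow_le_pow_left₀ (abs_nonneg _) (hf y) 2
        _ = M ^ 2 * rexp (2 * a * ‖y - v‖ ^ 2) := by
          rw [mul_pow, ← Real.exp_nat_mul]
          ring_nf
    rw [← ENNReal.ofReal_mul (sq_nonneg M), Real.exp_add, ← mul_assoc, mul_right_comm]
    gcongr
    exact le_of_eq (by ring_nf)
  have hsqrt : (ENNReal.ofReal (M ^ 2) * ENNReal.ofReal ((π / (1 / 4 - 2 * a)) ^
      (Module.finrank ℝ V / 2 : ℝ) * rexp (1 / 4 * (2 * a) / (1 / 4 - 2 * a) * ‖ξ - v‖ ^ 2))) ^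
        (1 / 2 : ℝ) = ENNReal.ofReal (M * (4 * π / (1 - 8 * a)) ^
          (Module.finrank ℝ V / 4 : ℝ) * rexp (a / (1 - 8 * a) * ‖ξ - v‖ ^ 2)) := by
    have hπ : π / (1 / 4 - 2 * a) = 4 * π / (1 - 8 * a) := by
      field_simp
      ring
    rw [← ENNReal.ofReal_mul (sq_nonneg M), ENNReal.ofReal_rpow_of_nonneg (by positivity)
      (by norm_num), Real.mul_rpow (by positivity) (by positivity),
      Real.mul_rpow (by positivity) (by positivity), ← Real.sqrt_eq_rpow, Real.sqrt_sq hM,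
      ← Real.rpow_mul (by positivity), ← Real.exp_mul, hπ]
    have hd : (Module.finrank ℝ V / 2 : ℝ) * (1 / 2) = Module.finrank ℝ V / 4 := by ring
    have hexp : 1 / 4 * (2 * a) / (1 / 4 - 2 * a) * ‖ξ - v‖ ^ 2 * (1 / 2) =
        a / (1 - 8 * a) * ‖ξ - v‖ ^ 2 := by
      field_simp
      ring
    rw [hd, hexp, mul_assoc]
  calc (∫⁻ y, ENNReal.ofReal (f y ^ 2 * rexp (-‖y - ξ‖ ^ 2 / 4))) ^ (1 / 2 : ℝ)
      ≤ (ENNReal.ofReal (M ^ 2) *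
          ∫⁻ y, ENNReal.ofReal (rexp (-(1 / 4) * ‖y - ξ‖ ^ 2 + 2 * a * ‖y - v‖ ^ 2))) ^
            (1 / 2 : ℝ) := by
        rw [← lintegral_const_mul' _ _ ENNReal.ofReal_ne_top]
        gcongr with y
        exact hpt y
    _ = _ := by
        rw [lintegral_ofReal_exp_neg_mul_norm_sub_sq_add (by linarith), hsqrt]

end Gaussian

theorem exists_norm_le_norm_sub_smul_le {E : Type*} [NormedAddCommGroup E] [NormedSpace ℝ E]
    {r r' t : ℝ} (hr' : 0 ≤ r') (ht : 0 < t) {ξ : E} (hξ : ‖ξ‖ ≤ r) :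
    ∃ ξ' : E, ‖ξ'‖ ≤ r' ∧ ‖ξ - t • ξ'‖ ≤ max (r - r' * t) 0 := by
  rcases le_or_gt ‖ξ‖ (r' * t) with hle | hlt
  · refine ⟨t⁻¹ • ξ, ?_, by simp [smul_smul, ht.ne']⟩
    rw [norm_smul, norm_inv, Real.norm_of_nonneg ht.le, inv_mul_le_iff₀ ht]
    linarith
  · have hξ0 : 0 < ‖ξ‖ := (mul_nonneg hr' ht.le).trans_lt hlt
    refine ⟨(r' / ‖ξ‖) • ξ, ?_, le_max_of_le_left ?_⟩
    · rw [norm_smul, Real.norm_of_nonneg (by positivity), div_mul_cancel₀ _ hξ0.ne']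
    · have hsmul : ξ - t • (r' / ‖ξ‖) • ξ = ((‖ξ‖ - r' * t) / ‖ξ‖) • ξ := by
        rw [smul_smul, sub_div, div_self hξ0.ne', sub_smul, one_smul]
        congr 2
        ring
      rw [hsmul, norm_smul, Real.norm_of_nonneg (div_nonneg (by linarith) hξ0.le),
        div_mul_cancel₀ _ hξ0.ne']
      linarith

section Mehler

variable {k : ℕ} {τ : ℝ}

theorem mehlerK_nonneg (hτ : 0 ≤ τ) (y z : EuclideanSpace ℝ (Fin k)) :
    0 ≤ mehlerK k τ y z := by
  have : 0 ≤ 1 - rexp (-τ) := by simpa using hτ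
  unfold mehlerK
  positivity

theorem rpow_lintegral_le_gaussN {r : ℝ} (ψ : EuclideanSpace ℝ (Fin k) → ℝ)
    {ξ : EuclideanSpace ℝ (Fin k)} (hξ : ‖ξ‖ ≤ r) :
    (∫⁻ y, ENNReal.ofReal (ψ y ^ 2 * rexp (-‖y - ξ‖ ^ 2 / 4))) ^ (1 / 2 : ℝ) ≤ gaussN k r ψ :=
  le_biSup (fun ξ => (∫⁻ y, ENNReal.ofReal (ψ y ^ 2 * rexp (-‖y - ξ‖ ^ 2 / 4))) ^ (1 / 2 : ℝ))
    hξ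

theorem lintegral_mehlerK_mul_le (hτ : 0 < τ) {ψ : EuclideanSpace ℝ (Fin k) → ℝ}
    (hψ : AEMeasurable ψ) (y ξ' : EuclideanSpace ℝ (Fin k)) :
    ∫⁻ z, ENNReal.ofReal (mehlerK k τ y z * ψ z) ≤
      ENNReal.ofReal (rexp τ * (4 * π * (1 - rexp (-τ))) ^ (-(k : ℝ) / 2) *
          (4 * π * (1 - rexp (-τ)) / (1 + rexp (-τ))) ^ ((k : ℝ) / 4) *
          rexp (rexp (-τ) / (4 * (1 + rexp (-τ))) * ‖y - rexp (τ / 2) • ξ'‖ ^ 2)) *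
        (∫⁻ z, ENNReal.ofReal (ψ z ^ 2 * rexp (-‖z - ξ'‖ ^ 2 / 4))) ^ (1 / 2 : ℝ) := by
  set u := rexp (-τ) with hu
  have hu0 : 0 < u := exp_pos _
  have hu1 : u < 1 := Real.exp_lt_one_iff.mpr (neg_neg_of_pos hτ)
  have hs : 0 < 1 - u := sub_pos.mpr hu1
  have hu' : 1 + u ≠ 0 := by linarith
  set A := rexp τ * (4 * π * (1 - u)) ^ (-(k : ℝ) / 2) with hA_def
  have hA : 0 ≤ A := by positivity
  have hpt : ∀ z, ENNReal.ofReal (mehlerK k τ y z * ψ z) = ENNReal.ofReal A *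
      ENNReal.ofReal (rexp (-(1 / (4 * (1 - u))) * ‖z - rexp (-τ / 2) • y‖ ^ 2) * ψ z) :=
    fun z => by
      rw [← ENNReal.ofReal_mul hA, mehlerK, ← hu, norm_sub_rev z, hA_def]
      ring_nf
  have hb : 1 / 8 < 1 / (4 * (1 - u)) := by
    rw [div_lt_div_iff₀ (by norm_num) (by positivity)]
    linarith
  have hπ : π / (2 * (1 / (4 * (1 - u))) - 1 / 4) = 4 * π * (1 - u) / (1 + u) := by
    rw [show 2 * (1 / (4 * (1 - u))) - 1 / 4 = (1 + u) / (4 * (1 - u)) by field_simp; ring]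
    field_simp
  have hw : ‖rexp (-τ / 2) • y - ξ'‖ ^ 2 = u * ‖y - rexp (τ / 2) • ξ'‖ ^ 2 := by
    have hsmul : rexp (-τ / 2) • y - ξ' = rexp (-τ / 2) • (y - rexp (τ / 2) • ξ') := by
      rw [smul_sub, smul_smul, ← Real.exp_add, neg_div, neg_add_cancel, Real.exp_zero, one_smul]
    rw [hsmul, norm_smul, Real.norm_of_nonneg (exp_pos _).le, mul_pow, ← Real.exp_nat_mul, hu]
    ring_nf
  have hexp : 1 / (4 * (1 - u)) / (8 * (1 / (4 * (1 - u))) - 1) *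
      ‖rexp (-τ / 2) • y - ξ'‖ ^ 2 = u / (4 * (1 + u)) * ‖y - rexp (τ / 2) • ξ'‖ ^ 2 := by
    rw [hw, show 8 * (1 / (4 * (1 - u))) - 1 = (1 + u) / (1 - u) by field_simp; ring]
    field_simp
  calc ∫⁻ z, ENNReal.ofReal (mehlerK k τ y z * ψ z)
      = ENNReal.ofReal A * ∫⁻ z,
          ENNReal.ofReal (rexp (-(1 / (4 * (1 - u))) * ‖z - rexp (-τ / 2) • y‖ ^ 2) * ψ z) := by
        simp_rw [hpt]
        exact lintegral_const_mul' _ _ ENNReal.ofReal_ne_top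
    _ ≤ _ := by
        grw [lintegral_ofReal_exp_neg_mul_norm_sub_sq_mul_le hb hψ _ ξ']
        rw [← mul_assoc, ← ENNReal.ofReal_mul hA, finrank_euclideanSpace_fin, hπ, hexp,
          mul_assoc A]

theorem integrable_mehlerK_mul (hτ : 0 < τ) {r' : ℝ} (hr' : 0 ≤ r')
    {ψ : EuclideanSpace ℝ (Fin k) → ℝ} (hψ : AEMeasurable ψ) (hψ0 : ∀ z, 0 ≤ ψ z)
    (hfin : gaussN k r' ψ ≠ ⊤) (y : EuclideanSpace ℝ (Fin k)) :
    Integrable fun z => mehlerK k τ y z * ψ z := by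
  have hK : Measurable fun z => mehlerK k τ y z := by
    unfold mehlerK
    fun_prop
  refine ⟨(hK.aemeasurable.mul hψ).aestronglyMeasurable, ?_⟩
  rw [hasFiniteIntegral_iff_ofReal
    (Filter.Eventually.of_forall fun z => mul_nonneg (mehlerK_nonneg hτ.le y z) (hψ0 z))]
  refine (lintegral_mehlerK_mul_le hτ hψ y 0).trans_lt
    (ENNReal.mul_lt_top ENNReal.ofReal_lt_top ?_)
  exact (rpow_lintegral_le_gaussN ψ (by simpa using hr')).trans_lt hfin.lt_top

theorem integral_mehlerK_mul_le (hτ : 0 < τ) {r' : ℝ} (hr' : 0 ≤ r')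
    {ψ : EuclideanSpace ℝ (Fin k) → ℝ} (hψ : AEMeasurable ψ) (hψ0 : ∀ z, 0 ≤ ψ z)
    (hfin : gaussN k r' ψ ≠ ⊤) (y : EuclideanSpace ℝ (Fin k)) {ξ' : EuclideanSpace ℝ (Fin k)}
    (hξ' : ‖ξ'‖ ≤ r') :
    ∫ z, mehlerK k τ y z * ψ z ≤
      rexp τ * (4 * π * (1 - rexp (-τ))) ^ (-(k : ℝ) / 2) *
          (4 * π * (1 - rexp (-τ)) / (1 + rexp (-τ))) ^ ((k : ℝ) / 4) *
          rexp (rexp (-τ) / (4 * (1 + rexp (-τ))) * ‖y - rexp (τ / 2) • ξ'‖ ^ 2) *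
        (gaussN k r' ψ).toReal := by
  have hs : 0 < 1 - rexp (-τ) := by simpa using hτ
  rw [integral_eq_lintegral_of_nonneg_ae
    (Filter.Eventually.of_forall fun z => mul_nonneg (mehlerK_nonneg hτ.le y z) (hψ0 z))
    (integrable_mehlerK_mul hτ hr' hψ hψ0 hfin y).aestronglyMeasurable]
  refine ENNReal.toReal_le_of_le_ofReal (by positivity) ?_
  rw [ENNReal.ofReal_mul (by positivity), ENNReal.ofReal_toReal hfin]
  grw [lintegral_mehlerK_mul_le hτ hψ y ξ', rpow_lintegral_le_gaussN ψ hξ']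

theorem rpow_lintegral_sq_integral_mehlerK_le (hτ : 0 < τ) {r' : ℝ}
    (hr' : 0 ≤ r') {ψ : EuclideanSpace ℝ (Fin k) → ℝ} (hψ : AEMeasurable ψ)
    (hψ0 : ∀ z, 0 ≤ ψ z) (hfin : gaussN k r' ψ ≠ ⊤) {ξ' : EuclideanSpace ℝ (Fin k)}
    (hξ' : ‖ξ'‖ ≤ r') (ξ : EuclideanSpace ℝ (Fin k)) :
    (∫⁻ y, ENNReal.ofReal ((∫ z, mehlerK k τ y z * ψ z) ^ 2 * rexp (-‖y - ξ‖ ^ 2 / 4))) ^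
        (1 / 2 : ℝ) ≤
      ENNReal.ofReal ((4 * π) ^ ((k : ℝ) / 2) * rexp τ *
          (4 * π * (1 - rexp (-τ))) ^ (-(k : ℝ) / 2) *
          rexp (rexp (-τ) / (4 * (1 - rexp (-τ))) * ‖ξ - rexp (τ / 2) • ξ'‖ ^ 2)) *
        gaussN k r' ψ := by
  have hS : ∀ y, |∫ z, mehlerK k τ y z * ψ z| ≤
      rexp τ * (4 * π * (1 - rexp (-τ))) ^ (-(k : ℝ) / 2) *
          (4 * π * (1 - rexp (-τ)) / (1 + rexp (-τ))) ^ ((k : ℝ) / 4) *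
          (gaussN k r' ψ).toReal *
        rexp (rexp (-τ) / (4 * (1 + rexp (-τ))) * ‖y - rexp (τ / 2) • ξ'‖ ^ 2) := fun y => by
    rw [abs_of_nonneg (integral_nonneg fun z => mul_nonneg (mehlerK_nonneg hτ.le y z) (hψ0 z))]
    exact (integral_mehlerK_mul_le hτ hr' hψ hψ0 hfin y hξ').trans_eq (by ring)
  have hs : 0 < 1 - rexp (-τ) := by simpa using hτ
  set u := rexp (-τ)
  have hu0 : 0 < u := exp_pos _
  have hu' : 1 + u ≠ 0 := by linarith
  have h8a : 1 - 8 * (u / (4 * (1 + u))) = (1 - u) / (1 + u) := by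
    field_simp
    ring
  have hconst : (4 * π * (1 - u) / (1 + u)) ^ ((k : ℝ) / 4) *
      (4 * π / (1 - 8 * (u / (4 * (1 + u))))) ^ ((k : ℝ) / 4) = (4 * π) ^ ((k : ℝ) / 2) := by
    rw [h8a, ← Real.mul_rpow (by positivity) (by positivity),
      show 4 * π * (1 - u) / (1 + u) * (4 * π / ((1 - u) / (1 + u))) = (4 * π) ^ (2 : ℝ) by
        rw [Real.rpow_two]
        field_simp,
      ← Real.rpow_mul (by positivity)]
    ring_nf
  have hexp : u / (4 * (1 + u)) / (1 - 8 * (u / (4 * (1 + u)))) = u / (4 * (1 - u)) := by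
    rw [h8a]
    field_simp
  calc _ ≤ ENNReal.ofReal (rexp τ * (4 * π * (1 - u)) ^ (-(k : ℝ) / 2) *
          (4 * π * (1 - u) / (1 + u)) ^ ((k : ℝ) / 4) * (gaussN k r' ψ).toReal *
          (4 * π / (1 - 8 * (u / (4 * (1 + u))))) ^ ((k : ℝ) / 4) *
          rexp (u / (4 * (1 + u)) / (1 - 8 * (u / (4 * (1 + u)))) *
            ‖ξ - rexp (τ / 2) • ξ'‖ ^ 2)) := by
        simpa only [finrank_euclideanSpace_fin] using
          rpow_lintegral_sq_mul_exp_le (by field_simp; linarith) _ ξ hS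
    _ = _ := by
        conv_rhs => rw [← ENNReal.ofReal_toReal hfin]
        rw [← ENNReal.ofReal_mul (by positivity), hexp, ← hconst]
        ring_nf

end Mehler

theorem velazquez_smoothing_general (k : ℕ) :
    ∃ C : ℝ, 0 < C ∧
      ∀ (τ r r' : ℝ), 0 < τ → 0 ≤ r → 0 ≤ r' →
        ∀ ψ : EuclideanSpace ℝ (Fin k) → ℝ, Measurable ψ → (∀ y, 0 ≤ ψ y) →
          gaussN k r' ψ < ⊤ →
          (∀ y, Integrable fun z => mehlerK k τ y z * ψ z) ∧
          gaussN k r (fun y => ∫ z, mehlerK k τ y z * ψ z) ≤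
            ENNReal.ofReal
              (C * Real.exp τ * (4 * π * (1 - Real.exp (-τ))) ^ (-(k : ℝ) / 2) *
                Real.exp (Real.exp (-τ) * max (r - r' * Real.exp (τ / 2)) 0 ^ 2 /
                  (4 * (1 - Real.exp (-τ))))) * gaussN k r' ψ := by
  refine ⟨(4 * π) ^ ((k : ℝ) / 2), by positivity,
    fun τ r r' hτ _ hr' ψ hψ hψ0 hfin => ⟨fun y => integrable_mehlerK_mul hτ hr'
      hψ.aemeasurable hψ0 hfin.ne y, iSup₂_le fun ξ hξ => ?_⟩⟩
  obtain ⟨ξ', hξ', hdist⟩ := exists_norm_le_norm_sub_smul_le hr' (exp_pos (τ / 2)) hξ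
  have hs : 0 < 1 - rexp (-τ) := by simpa using hτ
  grw [rpow_lintegral_sq_integral_mehlerK_le hτ hr' hψ.aemeasurable hψ0 hfin.ne hξ' ξ,
    mul_div_right_comm, hdist]

/-- Velázquez-type weighted smoothing inequality in the Euclidean case: for every `k ≥ 1`
there is `C = C(k) > 0` so that for all `τ > 0`, `r, r' ≥ 0` and nonnegative measurable `ψ`
with `N_{r'}(ψ) < ∞`, the function `S(τ)ψ(y) = ∫ K_τ(y,z)ψ(z) dz` is finite everywhere and
`N_r(S(τ)ψ) ≤ C e^τ (4π(1−e^{−τ}))^{−k/2} exp(e^{−τ}((r − r'e^{τ/2})₊)²/(4(1−e^{−τ}))) N_{r'}(ψ)`. -/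
theorem velazquez_smoothing (k : ℕ) (hk : 1 ≤ k) :
    ∃ C : ℝ, 0 < C ∧
      ∀ (τ r r' : ℝ), 0 < τ → 0 ≤ r → 0 ≤ r' →
        ∀ ψ : EuclideanSpace ℝ (Fin k) → ℝ, Measurable ψ → (∀ y, 0 ≤ ψ y) →
          gaussN k r' ψ < ⊤ →
          (∀ y, Integrable fun z => mehlerK k τ y z * ψ z) ∧
          gaussN k r (fun y => ∫ z, mehlerK k τ y z * ψ z) ≤
            ENNReal.ofReal
              (C * Real.exp τ * (4 * π * (1 - Real.exp (-τ))) ^ (-(k : ℝ) / 2) *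
                Real.exp (Real.exp (-τ) * max (r - r' * Real.exp (τ / 2)) 0 ^ 2 /
                  (4 * (1 - Real.exp (-τ))))) * gaussN k r' ψ :=
  velazquez_smoothing_general k
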